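/- arXiv:2301.04204 — 4 statements merged into one kernel-verified Lean document; each statement's English description precedes it below -/
import Mathlib

section
/- For all real numbers a, b, s with a ≥ 0, b ≥ 0, s ≥ 0, one has -a + √(a² + b·s) ≥ (-a + √(a² + b)) · min{s, 1}. -/
theorem stmt0 (a b s : ℝ) (ha : 0 ≤ a) (hb : 0 ≤ b) (hs : 0 ≤ s) :
    -a + Real.sqrt (a ^ 2 + b * s) ≥ (-a + Real.sqrt (a ^ 2 + b)) * min s 1 := by
  set u := Real.sqrt (a ^ 2 + b * s) with hu
  set v := Real.sqrt (a ^ 2 + b) with hv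
  have hu0 : 0 ≤ u := Real.sqrt_nonneg _
  have hv0 : 0 ≤ v := Real.sqrt_nonneg _
  have hbs : 0 ≤ b * s := mul_nonneg hb hs
  have hu2 : u ^ 2 = a ^ 2 + b * s := Real.sq_sqrt (by positivity)
  have hv2 : v ^ 2 = a ^ 2 + b := Real.sq_sqrt (by positivity)
  have hau : a ≤ u := by
    nlinarith [sq_nonneg (u - a), sq_nonneg (u + a)]
  have hav : a ≤ v := by
    nlinarith [sq_nonneg (v - a), sq_nonneg (v + a)]
  rcases le_total s 1 with h1 | h1
  · rw [min_eq_left h1]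
    have huv : u ≤ v := by
      rw [hu, hv]
      apply Real.sqrt_le_sqrt
      nlinarith
    rcases eq_or_lt_of_le (by positivity : (0:ℝ) ≤ a + u) with h0 | h0
    · have ha0 : a = 0 := by linarith
      have hu0' : u = 0 := by linarith
      have hbs0 : b * s = 0 := by nlinarith
      rcases mul_eq_zero.mp hbs0 with hb0 | hs0
      · have : v = 0 := by rw [hv, ha0, hb0]; simp
        simp [ha0, hu0', this]
      · simp [ha0, hu0', hs0]
    · have hpos : 0 < a + v := by linarith
      have key : b * s * (v - u) ≥ 0 := mul_nonneg hbs (by linarith)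
      nlinarith [mul_pos h0 hpos, mul_nonneg (mul_nonneg hbs (le_of_lt h0)) (sub_nonneg.2 huv)]
  · rw [min_eq_right h1]
    have huv : v ≤ u := by
      rw [hu, hv]
      apply Real.sqrt_le_sqrt
      nlinarith
    linarith
end

section
/- Let B(x) = -∑ᵢ₌₁ⁿ ln xᵢ on the positive orthant of ℝⁿ, with local norms ‖v‖ₓ = (∑ᵢ vᵢ²/xᵢ²)^{1/2} and dual norms ‖v‖ₓ* = (∑ᵢ vᵢ²xᵢ²)^{1/2}. Fix β ∈ (0,1). If x is in the positive orthant and y satisfies ‖y - x‖ₓ ≤ β, then for every v ∈ ℝⁿ, (1-β)‖v‖ₓ ≤ ‖v‖_y ≤ (1-β)⁻¹‖v‖ₓ and (1-β)‖v‖ₓ* ≤ ‖v‖_y* ≤ (1-β)⁻¹‖v‖ₓ*. -/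
/-- Local norm induced by the log barrier at `x`. -/
noncomputable def localNorm (n : ℕ) (x v : Fin n → ℝ) : ℝ :=
  Real.sqrt (∑ i, (v i) ^ 2 / (x i) ^ 2)

/-- Dual local norm induced by the log barrier at `x`. -/
noncomputable def dualNorm (n : ℕ) (x v : Fin n → ℝ) : ℝ :=
  Real.sqrt (∑ i, (v i) ^ 2 * (x i) ^ 2)

private lemma sqrt_sum_bound {n : ℕ} {c : ℝ} (hc : 0 ≤ c) {s t : Fin n → ℝ}
    (hle : ∀ i, c ^ 2 * s i ≤ t i) :
    c * Real.sqrt (∑ i, s i) ≤ Real.sqrt (∑ i, t i) := by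
  rw [← Real.sqrt_sq hc, ← Real.sqrt_mul (sq_nonneg c), Finset.mul_sum]
  exact Real.sqrt_le_sqrt (Finset.sum_le_sum fun i _ => hle i)

theorem stmt5 (n : ℕ) (β : ℝ) (hβ : β ∈ Set.Ioo (0 : ℝ) 1) (x y : Fin n → ℝ)
    (hx : ∀ i, 0 < x i) (h : localNorm n x (y - x) ≤ β) :
    ∀ v : Fin n → ℝ,
      ((1 - β) * localNorm n x v ≤ localNorm n y v ∧
        localNorm n y v ≤ (1 - β)⁻¹ * localNorm n x v) ∧
      ((1 - β) * dualNorm n x v ≤ dualNorm n y v ∧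
        dualNorm n y v ≤ (1 - β)⁻¹ * dualNorm n x v) := by
  obtain ⟨hβ0, hβ1⟩ := hβ
  have hb : (0 : ℝ) < 1 - β := by linarith
  -- pointwise bounds on y
  have hkey : ∀ i, (1 - β) * x i ≤ y i ∧ (1 - β) * y i ≤ x i := by
    intro i
    have hxi := hx i
    have hterm : ((y - x) i) ^ 2 / (x i) ^ 2 ≤ ∑ j, ((y - x) j) ^ 2 / (x j) ^ 2 :=
      Finset.single_le_sum (f := fun j => ((y - x) j) ^ 2 / (x j) ^ 2)
        (fun j _ => by positivity) (Finset.mem_univ i)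
    have hs : Real.sqrt (((y - x) i) ^ 2 / (x i) ^ 2) ≤ β :=
      le_trans (Real.sqrt_le_sqrt hterm) h
    have h1 : ((y - x) i) ^ 2 / (x i) ^ 2 ≤ β ^ 2 := by
      have := Real.sq_sqrt (show (0:ℝ) ≤ ((y - x) i) ^ 2 / (x i) ^ 2 by positivity)
      nlinarith [Real.sqrt_nonneg (((y - x) i) ^ 2 / (x i) ^ 2)]
    have h2 : (y i - x i) ^ 2 ≤ β ^ 2 * (x i) ^ 2 := by
      have hx2 : (0:ℝ) < (x i) ^ 2 := by positivity
      have := (div_le_iff₀ hx2).mp h1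
      simpa using this
    have h3 : |y i - x i| ≤ β * x i := by
      rw [← Real.sqrt_sq_eq_abs]
      calc Real.sqrt ((y i - x i) ^ 2) ≤ Real.sqrt ((β * x i) ^ 2) :=
            Real.sqrt_le_sqrt (by nlinarith)
        _ = β * x i := Real.sqrt_sq (by positivity)
    obtain ⟨h4, h5⟩ := abs_le.mp h3
    constructor
    · linarith
    · nlinarith
  have hy : ∀ i, 0 < y i := fun i =>
    lt_of_lt_of_le (by have := hx i; positivity) (hkey i).1
  intro v
  -- the four core inequalities
  have A1 : (1 - β) * localNorm n x v ≤ localNorm n y v := by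
    apply sqrt_sum_bound hb.le
    intro i
    have hxi := hx i; have hyi := hy i
    rw [← mul_div_assoc, div_le_div_iff₀ (by positivity) (by positivity)]
    nlinarith [mul_le_mul_of_nonneg_left
      (mul_self_le_mul_self (by positivity) (hkey i).2) (sq_nonneg (v i))]
  have A2 : (1 - β) * localNorm n y v ≤ localNorm n x v := by
    apply sqrt_sum_bound hb.le
    intro i
    have hxi := hx i; have hyi := hy i
    rw [← mul_div_assoc, div_le_div_iff₀ (by positivity) (by positivity)]
    nlinarith [mul_le_mul_of_nonneg_left
      (mul_self_le_mul_self (by positivity) (hkey i).1) (sq_nonneg (v i))]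
  have A3 : (1 - β) * dualNorm n x v ≤ dualNorm n y v := by
    apply sqrt_sum_bound hb.le
    intro i
    have hxi := hx i; have hyi := hy i
    nlinarith [mul_le_mul_of_nonneg_left
      (mul_self_le_mul_self (by positivity) (hkey i).1) (sq_nonneg (v i))]
  have A4 : (1 - β) * dualNorm n y v ≤ dualNorm n x v := by
    apply sqrt_sum_bound hb.le
    intro i
    have hxi := hx i; have hyi := hy i
    nlinarith [mul_le_mul_of_nonneg_left
      (mul_self_le_mul_self (by positivity) (hkey i).2) (sq_nonneg (v i))]
  have conv : ∀ a b : ℝ, (1 - β) * a ≤ b → a ≤ (1 - β)⁻¹ * b := by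
    intro a b hab
    rw [inv_mul_eq_div, le_div_iff₀ hb]
    linarith [hab]
  exact ⟨⟨A1, conv _ _ A2⟩, ⟨A3, conv _ _ A4⟩⟩
end

section
/- Let f_hi, f_low, γ, μ₀ > 0 be reals, K ⊂ ℝⁿ, B : K → ℝ, f : K → ℝ, c̃ : K → ℝᵐ, and suppose f(x) + μB(x) + γ‖c̃(x)‖² ≥ f_low for all x ∈ K and μ ∈ (0, μ₀]. Let ρ > 2γ, μ ∈ (0, μ₀], λ ∈ ℝᵐ, and x ∈ K satisfy f(x) + μB(x) + λᵀc̃(x) + (ρ/2)‖c̃(x)‖² ≤ f_hi. Then ‖c̃(x)‖ ≤ √(2(f_hi - f_low)/(ρ - 2γ) + ‖λ‖²/(ρ - 2γ)²) + ‖λ‖/(ρ - 2γ). -/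
open scoped RealInnerProductSpace

theorem stmt9 (n m : ℕ) (K : Set (EuclideanSpace ℝ (Fin n)))
    (B f : EuclideanSpace ℝ (Fin n) → ℝ)
    (c : EuclideanSpace ℝ (Fin n) → EuclideanSpace ℝ (Fin m))
    (fhi flow γ μ₀ : ℝ) (hfhi : 0 < fhi) (hflow : 0 < flow) (hγ : 0 < γ) (hμ₀ : 0 < μ₀)
    (hlow : ∀ x ∈ K, ∀ μ : ℝ, 0 < μ → μ ≤ μ₀ → f x + μ * B x + γ * ‖c x‖ ^ 2 ≥ flow)
    (ρ μ : ℝ) (hρ : ρ > 2 * γ) (hμ : 0 < μ) (hμ' : μ ≤ μ₀)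
    (l : EuclideanSpace ℝ (Fin m)) (x : EuclideanSpace ℝ (Fin n)) (hxK : x ∈ K)
    (hx : f x + μ * B x + ⟪l, c x⟫ + (ρ / 2) * ‖c x‖ ^ 2 ≤ fhi) :
    ‖c x‖ ≤ Real.sqrt (2 * (fhi - flow) / (ρ - 2 * γ) + ‖l‖ ^ 2 / (ρ - 2 * γ) ^ 2) +
      ‖l‖ / (ρ - 2 * γ) := by
  have hs : 0 < ρ - 2 * γ := by linarith
  have h1 := hlow x hxK μ hμ hμ'
  have h2 : |⟪l, c x⟫| ≤ ‖l‖ * ‖c x‖ := abs_real_inner_le_norm l (c x)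
  have h2' : -(‖l‖ * ‖c x‖) ≤ ⟪l, c x⟫ := neg_le_of_abs_le h2
  have key : (ρ - 2 * γ) / 2 * ‖c x‖ ^ 2 - ‖l‖ * ‖c x‖ ≤ fhi - flow := by nlinarith
  set t := ‖c x‖ with ht
  set L := ‖l‖ with hL
  set s := ρ - 2 * γ with hsdef
  clear_value t L s
  rcases le_or_gt t (L / s) with h | h
  · have := Real.sqrt_nonneg (2 * (fhi - flow) / s + L ^ 2 / s ^ 2)
    linarith
  · have hy : 0 ≤ t - L / s := by linarith
    have h3 : (s * t - L) ^ 2 ≤ 2 * (fhi - flow) * s + L ^ 2 := by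
      nlinarith [mul_le_mul_of_nonneg_left key (le_of_lt hs), sq_nonneg (s * t - L)]
    have hsq : (t - L / s) ^ 2 ≤ 2 * (fhi - flow) / s + L ^ 2 / s ^ 2 := by
      rw [show (t - L / s) ^ 2 = (s * t - L) ^ 2 / s ^ 2 by
            field_simp,
          show 2 * (fhi - flow) / s + L ^ 2 / s ^ 2 = (2 * (fhi - flow) * s + L ^ 2) / s ^ 2 by
            field_simp]
      gcongr
    have hA : 0 ≤ 2 * (fhi - flow) / s + L ^ 2 / s ^ 2 := le_trans (sq_nonneg _) hsq
    have := (Real.le_sqrt hy hA).mpr hsq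
    linarith
end

section
/- Let H ∈ ℝ^{n×n} be symmetric and v ∈ ℝⁿ a unit vector with vᵀHv ≤ -ε/2 for some ε > 0. Define d = -sgn(vᵀg)·min{|vᵀHv|, β}·v for some g ∈ ℝⁿ and β ≥ ε. Then dᵀg ≤ 0, dᵀHd ≤ -‖d‖³, and ‖d‖ ≥ ε/2. -/
/-- `sgn s` is `1` if `s ≥ 0` and `-1` otherwise. -/
noncomputable def sgn (s : ℝ) : ℝ := if 0 ≤ s then 1 else -1

open Matrix in
theorem stmt18 (n : ℕ) (H : Matrix (Fin n) (Fin n) ℝ) (hH : H.IsSymm)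
    (ε β : ℝ) (hε : 0 < ε) (hβ : ε ≤ β) (v g d : Fin n → ℝ)
    (hv : Real.sqrt (∑ i, v i ^ 2) = 1)
    (hcurv : v ⬝ᵥ H.mulVec v ≤ -ε / 2)
    (hd : d = (-(sgn (v ⬝ᵥ g)) * min |v ⬝ᵥ H.mulVec v| β) • v) :
    d ⬝ᵥ g ≤ 0 ∧
      d ⬝ᵥ H.mulVec d ≤ -(Real.sqrt (∑ i, d i ^ 2)) ^ 3 ∧
      Real.sqrt (∑ i, d i ^ 2) ≥ ε / 2 := by
  set c := v ⬝ᵥ H.mulVec v with hc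
  set s := v ⬝ᵥ g with hs
  have hcneg : c < 0 := lt_of_le_of_lt hcurv (by linarith)
  have habs : |c| = -c := abs_of_neg hcneg
  set m := min |c| β with hm
  have hm2 : ε / 2 ≤ m := le_min (by rw [habs]; linarith) (by linarith)
  have hmpos : 0 < m := lt_of_lt_of_le (by linarith) hm2
  have hmc : m ≤ -c := habs ▸ min_le_left _ _
  have hsgn : sgn s * s = |s| := by
    unfold sgn; split
    · rw [abs_of_nonneg ‹_›]; ring
    · rw [abs_of_neg (lt_of_not_ge ‹_›)]; ring
  have hsgn2 : sgn s ^ 2 = 1 := by unfold sgn; split <;> ring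
  have hv2 : ∑ i, v i ^ 2 = 1 := Real.sqrt_eq_one.mp hv
  have hd2 : ∑ i, d i ^ 2 = m ^ 2 := by
    subst hd
    simp only [Pi.smul_apply, smul_eq_mul, mul_pow]
    rw [← Finset.mul_sum, hv2]
    ring_nf
    nlinarith [hsgn2]
  have hnorm : Real.sqrt (∑ i, d i ^ 2) = m := by
    rw [hd2, Real.sqrt_sq hmpos.le]
  refine ⟨?_, ?_, ?_⟩
  · rw [hd, smul_dotProduct, smul_eq_mul, ← hs]
    have : -(sgn s) * m * s = -(m * |s|) := by rw [← hsgn]; ring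
    rw [this]
    exact neg_nonpos.mpr (mul_nonneg hmpos.le (abs_nonneg _))
  · rw [hnorm, hd, smul_dotProduct, Matrix.mulVec_smul, dotProduct_smul,
      smul_eq_mul, smul_eq_mul, ← hc]
    have e : -sgn s * m * (-sgn s * m * c) = sgn s ^ 2 * (m ^ 2 * c) := by ring
    rw [e, hsgn2, one_mul]
    nlinarith [hmc, sq_nonneg m, hmpos]
  · rw [hnorm]; exact hm2
end
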